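/- Let θ ∈ (0,1), and let g(u) = k·f_θ(q·f_θ(u)) with f_θ(h) = arctanh(θ·tanh h), k,q positive integers. If kq·θ² ≤ 1, then g(u) < u for all u > 0 and g(u) > u for all u < 0. -/

import Mathlib

/-- The real inverse hyperbolic tangent, `arctanh x = (1/2) ln((1+x)/(1-x))`. -/
noncomputable def arctanh (x : ℝ) : ℝ := (1 / 2) * Real.log ((1 + x) / (1 - x))

/-- The Ising compatibility function `f_θ(h) = arctanh(θ · tanh h)`. -/
noncomputable def fIsing (θ h : ℝ) : ℝ := arctanh (θ * Real.tanh h)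

/-!
Since `f_θ` is odd, only `u > 0` matters. There `tanh` is strictly concave with `tanh 0 = 0`, so
`θ tanh w < tanh (θ w)`, i.e. `0 < f_θ(w) < θ w` for `w > 0`. Hence
`g(u) ≤ kqθ · f_θ(u) ≤ f_θ(u) / θ < u` as soon as `kqθ² ≤ 1`.
-/

open Set

namespace Real

theorem hasDerivAt_tanh (x : ℝ) : HasDerivAt tanh (1 / cosh x ^ 2) x := by
  have h := (hasDerivAt_sinh x).div (hasDerivAt_cosh x) (cosh_pos x).ne'
  have hfun : sinh / cosh = tanh := funext fun y => (tanh_eq_sinh_div_cosh y).symm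
  rwa [hfun, mul_comm (sinh x), ← sq, ← sq, cosh_sq_sub_sinh_sq] at h

theorem strictConcaveOn_tanh : StrictConcaveOn ℝ (Ici 0) tanh := by
  refine StrictAntiOn.strictConcaveOn_of_deriv (convex_Ici 0)
    (fun x _ => (hasDerivAt_tanh x).continuousAt.continuousWithinAt) ?_
  rw [interior_Ici]
  intro x hx y hy hxy
  simp only [(hasDerivAt_tanh _).deriv]
  have hcosh : cosh x < cosh y := cosh_strictMonoOn (mem_Ioi.1 hx).le (mem_Ioi.1 hy).le hxy
  gcongr

theorem tanh_nonneg {x : ℝ} (hx : 0 ≤ x) : 0 ≤ tanh x := by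
  rw [tanh_eq_sinh_div_cosh]
  exact div_nonneg (sinh_nonneg_iff.2 hx) (cosh_pos x).le

theorem mul_tanh_lt_tanh_mul {θ w : ℝ} (hθ : θ ∈ Ioo 0 1) (hw : 0 < w) :
    θ * tanh w < tanh (θ * w) := by
  have h := strictConcaveOn_tanh.2 (mem_Ici.2 hw.le) (mem_Ici.2 le_rfl) hw.ne'
    hθ.1 (sub_pos.2 hθ.2) (add_sub_cancel θ 1)
  simpa using h

end Real

open Real

theorem arctanh_eq_artanh {x : ℝ} (hx : x ∈ Icc (-1) 1) : arctanh x = artanh x :=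
  (artanh_eq_half_log hx).symm

theorem arctanh_neg (x : ℝ) : arctanh (-x) = -arctanh x := by
  have hinv : (1 + -x) / (1 - -x) = ((1 + x) / (1 - x))⁻¹ := by rw [inv_div]; ring
  rw [arctanh, arctanh, hinv, log_inv]
  ring

theorem fIsing_neg (θ h : ℝ) : fIsing θ (-h) = -fIsing θ h := by
  rw [fIsing, fIsing, tanh_neg, mul_neg, arctanh_neg]

theorem fIsing_eq_artanh {θ : ℝ} (hθ : |θ| ≤ 1) (h : ℝ) : fIsing θ h = artanh (θ * tanh h) := by
  refine arctanh_eq_artanh (abs_le.1 ?_)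
  rw [abs_mul]
  exact mul_le_one₀ hθ (abs_nonneg _) (abs_tanh_lt_one h).le

theorem fIsing_nonneg {θ w : ℝ} (hθ : θ ∈ Icc 0 1) (hw : 0 ≤ w) : 0 ≤ fIsing θ w := by
  rw [fIsing_eq_artanh (abs_le.2 ⟨by linarith [hθ.1], hθ.2⟩)]
  exact artanh_nonneg (mul_nonneg hθ.1 (tanh_nonneg hw))

theorem fIsing_lt_mul {θ w : ℝ} (hθ : θ ∈ Ioo 0 1) (hw : 0 < w) : fIsing θ w < θ * w := by
  have hθt : 0 ≤ θ * tanh w := mul_nonneg hθ.1.le (tanh_nonneg hw.le)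
  calc fIsing θ w = artanh (θ * tanh w) := fIsing_eq_artanh (abs_le.2 ⟨by linarith [hθ.1], hθ.2.le⟩) w
    _ < artanh (tanh (θ * w)) :=
      artanh_lt_artanh (by linarith) (tanh_lt_one _) (mul_tanh_lt_tanh_mul hθ hw)
    _ = θ * w := artanh_tanh _

theorem fIsing_le_mul {θ w : ℝ} (hθ : θ ∈ Ioo 0 1) (hw : 0 ≤ w) : fIsing θ w ≤ θ * w := by
  rcases hw.eq_or_lt with rfl | hw
  · simp [fIsing, arctanh]
  · exact (fIsing_lt_mul hθ hw).le

theorem mul_fIsing_mul_fIsing_lt_self {θ k q u : ℝ} (hθ : θ ∈ Ioo 0 1) (hk : 0 ≤ k) (hq : 0 ≤ q)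
    (hcrit : k * q * θ ^ 2 ≤ 1) (hu : 0 < u) : k * fIsing θ (q * fIsing θ u) < u := by
  have hf : 0 ≤ fIsing θ u := fIsing_nonneg (Ioo_subset_Icc_self hθ) hu.le
  calc k * fIsing θ (q * fIsing θ u) ≤ k * (θ * (q * fIsing θ u)) :=
        mul_le_mul_of_nonneg_left (fIsing_le_mul hθ (mul_nonneg hq hf)) hk
    _ = k * q * θ ^ 2 * (fIsing θ u / θ) := by field_simp [hθ.1.ne']
    _ ≤ fIsing θ u / θ := mul_le_of_le_one_left (div_nonneg hf hθ.1.le) hcrit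
    _ < u := (div_lt_iff₀' hθ.1).2 (fIsing_lt_mul hθ hu)

theorem g_below_diagonal_general (θ : ℝ) (hθ : θ ∈ Set.Ioo (0 : ℝ) 1)
    (k q : ℕ)
    (hcrit : (k : ℝ) * q * θ ^ 2 ≤ 1) :
    (∀ u : ℝ, 0 < u → k * fIsing θ (q * fIsing θ u) < u) ∧
    (∀ u : ℝ, u < 0 → u < k * fIsing θ (q * fIsing θ u)) := by
  have below : ∀ u : ℝ, 0 < u → k * fIsing θ (q * fIsing θ u) < u := fun u hu =>
    mul_fIsing_mul_fIsing_lt_self hθ k.cast_nonneg q.cast_nonneg hcrit hu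
  refine ⟨below, fun u hu => ?_⟩
  have h := below (-u) (neg_pos.2 hu)
  rw [fIsing_neg, mul_neg, fIsing_neg] at h
  linarith

/-- If `kqθ² ≤ 1` then `g(u) = k f_θ(q f_θ(u))` satisfies `g(u) < u` for `u > 0`
and `g(u) > u` for `u < 0`. -/
theorem g_below_diagonal (θ : ℝ) (hθ : θ ∈ Set.Ioo (0 : ℝ) 1)
    (k q : ℕ) (hk : 0 < k) (hq : 0 < q)
    (hcrit : (k : ℝ) * q * θ ^ 2 ≤ 1) :
    (∀ u : ℝ, 0 < u → k * fIsing θ (q * fIsing θ u) < u) ∧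
    (∀ u : ℝ, u < 0 → u < k * fIsing θ (q * fIsing θ u)) :=
  g_below_diagonal_general θ hθ k q hcrit
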